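/- arXiv:2509.25347 — 4 statements merged into one kernel-verified Lean document; each statement's English description precedes it below -/
import Mathlib

section
/- Every nonzero eigenvalue λ of the drag matrix Ω is real and strictly negative. -/
open Matrix BigOperators

noncomputable def dragMatrix (N : ℕ) (ε α : Fin N → ℝ) :
    Matrix (Fin (N + 1)) (Fin (N + 1)) ℝ :=
  Matrix.of fun i j =>
    if hi : i = 0 then
      if hj : j = 0 then -∑ k, ε k * α k
      else α (j.pred hj)
    else
      if hj : j = 0 then ε (i.pred hi) * α (i.pred hi)
      else if i = j then -α (i.pred hi) else 0

/-- Every nonzero (complex) eigenvalue of the drag matrix Ω is real and strictly negative. -/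
theorem stmt_2 (N : ℕ) (hN : 1 ≤ N) (ε α : Fin N → ℝ)
    (hε : ∀ i, 0 < ε i) (hα : ∀ i, 0 < α i) :
    ∀ μ : ℂ, μ ∈ spectrum ℂ ((dragMatrix N ε α).map (Complex.ofReal)) → μ ≠ 0 →
      μ.im = 0 ∧ μ.re < 0 := by
  intro μ hμ hμ0
  set M := (dragMatrix N ε α).map (Complex.ofReal) with hMdef
  -- get an eigenvector
  have hμ' : μ ∈ spectrum ℂ (Matrix.toLinAlgEquiv' M) := by
    rwa [AlgEquiv.spectrum_eq]
  have hev : Module.End.HasEigenvalue (Matrix.toLinAlgEquiv' M) μ :=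
    Module.End.HasEigenvalue.of_mem_spectrum hμ'
  obtain ⟨v, hv⟩ := hev.exists_hasEigenvector
  have hvne : v ≠ 0 := hv.2
  have heq : M.mulVec v = μ • v := by
    have := hv.apply_eq_smul
    rwa [Matrix.toLinAlgEquiv'_apply] at this
  have hcomp : ∀ i, M.mulVec v i = μ * v i := by
    intro i; rw [heq]; rfl
  -- matrix entries
  have hM00 : M 0 0 = ((-∑ k, ε k * α k : ℝ) : ℂ) := by
    simp [hMdef, dragMatrix, Matrix.map_apply]
  have hM0s : ∀ k : Fin N, M 0 k.succ = ((α k : ℝ) : ℂ) := by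
    intro k
    simp [hMdef, dragMatrix, Matrix.map_apply, Fin.succ_ne_zero, Fin.pred_succ]
  have hMs0 : ∀ k : Fin N, M k.succ 0 = ((ε k * α k : ℝ) : ℂ) := by
    intro k
    simp [hMdef, dragMatrix, Matrix.map_apply, Fin.succ_ne_zero, Fin.pred_succ]
  have hMss : ∀ k l : Fin N, M k.succ l.succ =
      if k = l then ((-α k : ℝ) : ℂ) else 0 := by
    intro k l
    simp [hMdef, dragMatrix, Matrix.map_apply, Fin.succ_ne_zero, Fin.pred_succ,
      Fin.succ_inj, apply_ite (Complex.ofReal)]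
  -- row expansions of the eigenvalue equation
  have hrow0 : M.mulVec v 0 =
      ((-∑ k, ε k * α k : ℝ) : ℂ) * v 0 + ∑ k, ((α k : ℝ) : ℂ) * v k.succ := by
    rw [Matrix.mulVec, dotProduct, Fin.sum_univ_succ, hM00]
    simp only [hM0s]
  have hrows : ∀ k : Fin N, M.mulVec v k.succ =
      ((ε k * α k : ℝ) : ℂ) * v 0 + ((-α k : ℝ) : ℂ) * v k.succ := by
    intro k
    rw [Matrix.mulVec, dotProduct, Fin.sum_univ_succ, hMs0]
    congr 1
    have : ∀ l : Fin N, M k.succ l.succ * v l.succ =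
        if k = l then ((-α k : ℝ) : ℂ) * v l.succ else 0 := by
      intro l; rw [hMss]; split <;> simp
    rw [Finset.sum_congr rfl fun l _ => this l, Finset.sum_ite_eq]
    simp
  -- the weighted norm and the nonnegative quantity
  set n : ℝ := Complex.normSq (v 0) + ∑ k, (ε k)⁻¹ * Complex.normSq (v k.succ) with hndef
  set S : ℝ := ∑ k, (α k / ε k) * Complex.normSq ((ε k : ℂ) * v 0 - v k.succ) with hSdef
  have hsum_nonneg : 0 ≤ ∑ k, (ε k)⁻¹ * Complex.normSq (v k.succ) :=
    Finset.sum_nonneg fun k _ =>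
      mul_nonneg (le_of_lt (inv_pos.mpr (hε k))) (Complex.normSq_nonneg _)
  have hn : 0 < n := by
    obtain ⟨i, hi⟩ := Function.ne_iff.mp hvne
    refine Fin.cases ?_ ?_ i hi
    · intro h0
      exact add_pos_of_pos_of_nonneg (Complex.normSq_pos.mpr h0) hsum_nonneg
    · intro k hk
      have hterm : 0 < (ε k)⁻¹ * Complex.normSq (v k.succ) :=
        mul_pos (inv_pos.mpr (hε k)) (Complex.normSq_pos.mpr hk)
      have hle : (ε k)⁻¹ * Complex.normSq (v k.succ) ≤
          ∑ j, (ε j)⁻¹ * Complex.normSq (v j.succ) :=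
        Finset.single_le_sum (f := fun j => (ε j)⁻¹ * Complex.normSq (v j.succ))
          (fun j _ => mul_nonneg (le_of_lt (inv_pos.mpr (hε j))) (Complex.normSq_nonneg _))
          (Finset.mem_univ k)
      exact add_pos_of_nonneg_of_pos (Complex.normSq_nonneg _) (lt_of_lt_of_le hterm hle)
  have hS0 : 0 ≤ S := by
    refine Finset.sum_nonneg fun k _ => mul_nonneg ?_ (Complex.normSq_nonneg _)
    exact div_nonneg (le_of_lt (hα k)) (le_of_lt (hε k))
  -- the two evaluations of the weighted inner product
  have hA : (starRingEnd ℂ) (v 0) * M.mulVec v 0 +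
      ∑ k, ((ε k : ℂ))⁻¹ * ((starRingEnd ℂ) (v k.succ) * M.mulVec v k.succ)
      = μ * (n : ℂ) := by
    simp only [hcomp, hndef]
    push_cast
    rw [mul_add, Finset.mul_sum]
    congr 1
    · rw [Complex.normSq_eq_conj_mul_self]; ring
    · refine Finset.sum_congr rfl fun k _ => ?_
      rw [Complex.normSq_eq_conj_mul_self]; ring
  have hB : (starRingEnd ℂ) (v 0) * M.mulVec v 0 +
      ∑ k, ((ε k : ℂ))⁻¹ * ((starRingEnd ℂ) (v k.succ) * M.mulVec v k.succ)
      = -(S : ℂ) := by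
    rw [hrow0]
    simp only [hrows, hSdef]
    push_cast
    simp only [Complex.normSq_eq_conj_mul_self, map_sub, _root_.map_mul, Complex.conj_ofReal,
      neg_mul, mul_neg, mul_add, add_mul, Finset.sum_mul, Finset.mul_sum,
      ← Finset.sum_neg_distrib, ← Finset.sum_add_distrib]
    refine Finset.sum_congr rfl fun k _ => ?_
    have hεne : (ε k : ℂ) ≠ 0 := by
      exact_mod_cast ne_of_gt (hε k)
    field_simp
    ring
  have hμn : μ * (n : ℂ) = -(S : ℂ) := hA.symm.trans hB
  have hnne : (n : ℂ) ≠ 0 := by exact_mod_cast ne_of_gt hn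
  have hμval : μ = ((-(S / n) : ℝ) : ℂ) := by
    have h1 : μ = -(S : ℂ) / (n : ℂ) := (eq_div_iff hnne).mpr hμn
    rw [h1]; push_cast; ring
  have hSne : S ≠ 0 := by
    intro h
    apply hμ0
    rw [hμval, h]
    simp
  have hSpos : 0 < S := lt_of_le_of_ne hS0 (Ne.symm hSne)
  constructor
  · rw [hμval]; exact Complex.ofReal_im _
  · rw [hμval, Complex.ofReal_re]
    exact neg_lt_zero.mpr (div_pos hSpos hn)
end

section
/- For any Δt > 0, the matrix I - Δt·Ω is invertible, where Ω is the drag matrix. -/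
open Matrix BigOperators

/-- For any `Δt > 0`, the matrix `I - Δt·Ω` is invertible. -/
theorem stmt_4 (N : ℕ) (hN : 1 ≤ N) (ε α : Fin N → ℝ)
    (hε : ∀ i, 0 < ε i) (hα : ∀ i, 0 < α i) (Δt : ℝ) (hΔt : 0 < Δt) :
    IsUnit (1 - Δt • dragMatrix N ε α) := by
  set M : Matrix (Fin (N+1)) (Fin (N+1)) ℝ := 1 - Δt • dragMatrix N ε α with hM
  rw [Matrix.isUnit_iff_isUnit_det]
  refine isUnit_iff_ne_zero.mpr ?_
  apply det_ne_zero_of_sum_col_lt_diag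
  intro k
  induction k using Fin.cases with
  | zero =>
    have hdiag : M 0 0 = 1 + Δt * ∑ j, ε j * α j := by
      simp [hM, dragMatrix]
    have hoff : ∀ j : Fin N, M j.succ 0 = -(Δt * (ε j * α j)) := by
      intro j
      simp [hM, dragMatrix, Fin.succ_ne_zero]
    have hsum : ∑ i ∈ Finset.univ.erase (0 : Fin (N+1)), ‖M i 0‖
        = Δt * ∑ j, ε j * α j := by
      rw [Finset.sum_erase_eq_sub (Finset.mem_univ _), Fin.sum_univ_succ]
      simp only [hoff, norm_neg]
      rw [add_sub_cancel_left, Finset.mul_sum]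
      refine Finset.sum_congr rfl fun j _ => ?_
      rw [Real.norm_eq_abs, abs_of_pos (mul_pos hΔt (mul_pos (hε j) (hα j)))]
    have hs : 0 ≤ Δt * ∑ j, ε j * α j :=
      mul_nonneg hΔt.le (Finset.sum_nonneg fun j _ => (mul_pos (hε j) (hα j)).le)
    rw [hsum, hdiag, Real.norm_eq_abs, abs_of_pos (by linarith)]
    linarith
  | succ m =>
    have hdiag : M m.succ m.succ = 1 + Δt * α m := by
      simp [hM, dragMatrix, Fin.succ_ne_zero]
    have hsum : ∑ i ∈ Finset.univ.erase m.succ, ‖M i m.succ‖ = Δt * α m := by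
      rw [Finset.sum_eq_single_of_mem (0 : Fin (N+1))
        (Finset.mem_erase.mpr ⟨(Fin.succ_ne_zero m).symm, Finset.mem_univ _⟩)]
      · have h0 : M 0 m.succ = -(Δt * α m) := by
          simp [hM, dragMatrix, Fin.succ_ne_zero, Matrix.one_apply, (Fin.succ_ne_zero m).symm]
        rw [h0, norm_neg, Real.norm_eq_abs, abs_of_pos (mul_pos hΔt (hα m))]
      · intro i hi hi0
        obtain ⟨i, rfl⟩ := Fin.exists_succ_eq.mpr hi0
        have hne : i ≠ m := fun h => (Finset.mem_erase.mp hi).1 (by rw [h])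
        have : M i.succ m.succ = 0 := by
          simp [hM, dragMatrix, Fin.succ_ne_zero, Fin.succ_inj, hne]
        simp [this]
    have := mul_pos hΔt (hα m)
    rw [hsum, hdiag, Real.norm_eq_abs, abs_of_pos (by linarith)]
    linarith
end

section
/- For the exact solution U(t) = e^{tΩ}U₀ of the drag ODE, the weighted total momentum M_g(t) + Σᵢ M_{d,i}(t) is constant in t and equals M_g(0) + Σᵢ M_{d,i}(0). -/
/-! Conservation of momentum is the statement that the row vector `(1, …, 1)` is a left null
vector of `Ω`: the momentum lost by the gas to dust species `i` is gained by that species, so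
every column of `Ω` sums to zero. A left null vector of `Ω` is fixed by every power `Ωᵏ` with
`k ≥ 1`, hence by the exponential series `e^{tΩ}`. -/

open Matrix BigOperators

open NormedSpace

theorem NormedSpace.mul_exp_eq_self_of_mul_eq_zero {𝔸 : Type*} [NormedRing 𝔸]
    [NormedAlgebra ℚ 𝔸] [CompleteSpace 𝔸] {a x : 𝔸} (h : a * x = 0) : a * exp x = a := by
  have hterm : ∀ n : ℕ, a * ((n.factorial⁻¹ : ℚ) • x ^ n) = if n = 0 then a else 0 := by
    rintro (_ | n)
    · simp
    · rw [mul_smul_comm, pow_succ', ← mul_assoc, h, zero_mul, smul_zero, if_neg n.succ_ne_zero]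
  have hsum := (exp_series_hasSum_exp' (𝕂 := ℚ) x).mul_left a
  simp only [hterm] at hsum
  exact hsum.unique (hasSum_ite_eq 0 a)

theorem Matrix.vecMul_exp_eq_self_of_vecMul_eq_zero {m 𝕂 : Type*} [Fintype m] [DecidableEq m]
    [RCLike 𝕂] {v : m → 𝕂} {A : Matrix m m 𝕂} (h : v ᵥ* A = 0) : v ᵥ* exp A = v := by
  open scoped Norms.Operator in
  have hrow : replicateRow m v * exp A = replicateRow m v :=
    mul_exp_eq_self_of_mul_eq_zero (by rw [← replicateRow_vecMul, h, replicateRow_zero])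
  rw [← replicateRow_vecMul] at hrow
  funext j
  exact congrFun (congrFun hrow j) j

theorem one_vecMul_dragMatrix (N : ℕ) (ε α : Fin N → ℝ) : 1 ᵥ* dragMatrix N ε α = 0 := by
  funext j
  simp only [vecMul, one_dotProduct, Pi.zero_apply]
  rw [Fin.sum_univ_succ]
  rcases Fin.eq_zero_or_eq_succ j with rfl | ⟨k, rfl⟩
  · simp [dragMatrix, Fin.succ_ne_zero]
  · simp [dragMatrix, Fin.succ_ne_zero, Fin.succ_inj, Finset.sum_ite_eq']

theorem stmt_6_general (N : ℕ) (ε α : Fin N → ℝ) (U₀ : Fin (N + 1) → ℝ) :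
    ∀ t : ℝ, ∑ i, (NormedSpace.exp (t • dragMatrix N ε α)).mulVec U₀ i = ∑ i, U₀ i := by
  intro t
  have hfix : 1 ᵥ* exp (t • dragMatrix N ε α) = 1 :=
    vecMul_exp_eq_self_of_vecMul_eq_zero (by rw [vecMul_smul, one_vecMul_dragMatrix, smul_zero])
  rw [← one_dotProduct, dotProduct_mulVec, hfix, one_dotProduct]

/-- For the exact solution `U(t) = e^{tΩ}U₀`, the total momentum `M_g + Σᵢ M_{d,i}`
is conserved in time. -/
theorem stmt_6 (N : ℕ) (hN : 1 ≤ N) (ε α : Fin N → ℝ)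
    (hε : ∀ i, 0 < ε i) (hα : ∀ i, 0 < α i) (U₀ : Fin (N + 1) → ℝ) :
    ∀ t : ℝ, ∑ i, (NormedSpace.exp (t • dragMatrix N ε α)).mulVec U₀ i = ∑ i, U₀ i :=
  stmt_6_general N ε α U₀
end

section
/- Suppose A is a square matrix, s, m are naturals, and e^{-2^{-s}A}·T_m(2^{-s}A) = I + G where T_m is the order-m Taylor polynomial of exp and ‖G‖ < 1 in a submultiplicative norm. Then there exists a matrix E commuting with A such that (T_m(2^{-s}A))^{2^s} = e^{A+E} and ‖E‖/‖A‖ ≤ -log(1 - ‖G‖)/‖2^{-s}A‖ (assuming A ≠ 0). -/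
/-!
Put `B = 2⁻ˢ A` and `T = T_m(B)`. Both `e^{-B}` and `T` commute with `A` and with `B`, hence so does
`G = e^{-B} T - 1`, and therefore so does the Mercator series `L = log (1 + G)`, which converges
for `‖G‖ < 1` with `‖L‖ ≤ ∑ ‖G‖ⁿ⁺¹/(n+1) = -log (1 - ‖G‖)`. Once `e^L = 1 + G` is known,
`T = e^B (1 + G) = e^{B + L}`, so `T^{2^s} = e^{A + E}` with `E = 2ˢ L`, and
`‖E‖ / ‖A‖ = ‖L‖ / ‖B‖`.

The identity `e^{log (1 + g)} = 1 + g` is proved in the closed subalgebra generated by `g`, which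
is commutative: as `d/dt log (1 + t g) = g (1 + t g)⁻¹`, the function
`t ↦ e^{-log (1 + t g)} (1 + t g)` has zero derivative on an interval containing `[0, 1]`.
-/

open Finset NormedSpace

theorem commute_of_exp_neg_mul_eq_one_add {𝔸 : Type*} [NormedRing 𝔸] [NormedAlgebra ℚ 𝔸]
    [CompleteSpace 𝔸] {a B T G : 𝔸} (haB : Commute a B) (haT : Commute a T)
    (hG : exp (-B) * T = 1 + G) : Commute a G := by
  have h := (haB.neg_right.exp_right.mul_right haT).sub_right (Commute.one_right a)
  rwa [hG, add_sub_cancel_left] at h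

section LogOneAdd

variable {𝔸 : Type*} [NormedRing 𝔸] [NormedAlgebra ℝ 𝔸]

noncomputable def logOneAdd (g : 𝔸) : 𝔸 :=
  ∑' n : ℕ, ((-1 : ℝ) ^ n / (n + 1)) • g ^ (n + 1)

@[simp]
theorem logOneAdd_zero : logOneAdd (0 : 𝔸) = 0 := by
  simp [logOneAdd]

theorem norm_logOneAdd_term_le (g : 𝔸) (n : ℕ) :
    ‖((-1 : ℝ) ^ n / (n + 1)) • g ^ (n + 1)‖ ≤ ‖g‖ ^ (n + 1) / (n + 1) := by
  rw [norm_smul, norm_div, norm_pow, norm_neg, norm_one, one_pow,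
    Real.norm_of_nonneg (by positivity), one_div_mul_eq_div]
  gcongr
  exact norm_pow_le' g n.succ_pos

theorem summable_norm_logOneAdd_term {g : 𝔸} (hg : ‖g‖ < 1) :
    Summable fun n : ℕ => ‖((-1 : ℝ) ^ n / (n + 1)) • g ^ (n + 1)‖ :=
  .of_nonneg_of_le (fun _ => norm_nonneg _) (norm_logOneAdd_term_le g)
    (Real.hasSum_pow_div_log_of_abs_lt_one (by rwa [abs_norm])).summable

theorem norm_logOneAdd_le {g : 𝔸} (hg : ‖g‖ < 1) : ‖logOneAdd g‖ ≤ -Real.log (1 - ‖g‖) := by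
  have hlog := Real.hasSum_pow_div_log_of_abs_lt_one (by rwa [abs_norm] : |‖g‖| < 1)
  calc ‖logOneAdd g‖ ≤ ∑' n : ℕ, ‖((-1 : ℝ) ^ n / (n + 1)) • g ^ (n + 1)‖ :=
        norm_tsum_le_tsum_norm (summable_norm_logOneAdd_term hg)
    _ ≤ ∑' n : ℕ, ‖g‖ ^ (n + 1) / (n + 1) :=
        (summable_norm_logOneAdd_term hg).tsum_le_tsum (norm_logOneAdd_term_le g) hlog.summable
    _ = -Real.log (1 - ‖g‖) := hlog.tsum_eq

theorem Commute.logOneAdd_right {a g : 𝔸} (h : Commute a g) : Commute a (logOneAdd g) :=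
  .tsum_right a fun n => (h.pow_right (n + 1)).smul_right _

theorem norm_smul_lt_one_of_mem_Ioo (g : 𝔸) {r x : ℝ} (hr : r * ‖g‖ < 1)
    (hx : x ∈ Set.Ioo (-r) r) : ‖x • g‖ < 1 :=
  (norm_smul_le x g).trans_lt <| lt_of_le_of_lt (by gcongr; exact (abs_lt.mpr hx).le) hr

theorem hasDerivAt_logOneAdd_smul [CompleteSpace 𝔸] (g : 𝔸) {r x : ℝ} (hr : r * ‖g‖ < 1)
    (hx : x ∈ Set.Ioo (-r) r) :
    HasDerivAt (fun t : ℝ => logOneAdd (t • g)) (g * ∑' n : ℕ, (-(x • g)) ^ n) x := by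
  have hderiv : ∀ (n : ℕ) (t : ℝ), HasDerivAt
      (fun t : ℝ => ((-1 : ℝ) ^ n / (n + 1) * t ^ (n + 1)) • g ^ (n + 1))
      ((-t) ^ n • g ^ (n + 1)) t := by
    intro n t
    refine (((hasDerivAt_pow (n + 1) t).const_mul ((-1 : ℝ) ^ n / (n + 1))).smul_const
      (g ^ (n + 1))).congr_deriv (congrArg (· • g ^ (n + 1)) ?_)
    rw [Nat.add_sub_cancel, neg_pow t]
    push_cast
    field_simp
  have hr0 : 0 < r := by linarith [hx.1, hx.2]
  have hbound : ∀ n : ℕ, ∀ t ∈ Set.Ioo (-r) r,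
      ‖(-t) ^ n • g ^ (n + 1)‖ ≤ (r * ‖g‖) ^ n * ‖g‖ := by
    intro n t ht
    rw [norm_smul, norm_pow, norm_neg, mul_pow, mul_assoc, ← pow_succ]
    exact mul_le_mul (pow_le_pow_left₀ (abs_nonneg t) (abs_lt.mpr ht).le n)
      (norm_pow_le' g n.succ_pos) (norm_nonneg _) (pow_nonneg hr0.le n)
  have hseries := hasDerivAt_tsum_of_isPreconnected
    ((summable_geometric_of_lt_one (by positivity) hr).mul_right ‖g‖) isOpen_Ioo
    isPreconnected_Ioo (fun n t _ => hderiv n t) hbound (y₀ := 0) ⟨by linarith, hr0⟩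
    (by simp) hx
  have hxg : ‖-(x • g)‖ < 1 := by rw [norm_neg]; exact norm_smul_lt_one_of_mem_Ioo g hr hx
  have hfun : (fun t : ℝ => logOneAdd (t • g)) =
      fun t => ∑' n : ℕ, ((-1 : ℝ) ^ n / (n + 1) * t ^ (n + 1)) • g ^ (n + 1) :=
    funext fun t => tsum_congr fun n => by rw [smul_pow, smul_smul]
  have hsum : g * ∑' n : ℕ, (-(x • g)) ^ n = ∑' n : ℕ, (-x) ^ n • g ^ (n + 1) := by
    rw [← (summable_geometric_of_norm_lt_one hxg).tsum_mul_left]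
    exact tsum_congr fun n => by rw [← neg_smul, smul_pow, mul_smul_comm, ← pow_succ']
  rw [hfun, hsum]
  exact hseries

theorem exp_logOneAdd_of_commRing {B : Type*} [NormedCommRing B] [NormedAlgebra ℝ B]
    [CompleteSpace B] {g : B} (hg : ‖g‖ < 1) : exp (logOneAdd g) = 1 + g := by
  let : NormedAlgebra ℚ B := .restrictScalars ℚ ℝ B
  set r : ℝ := 2 / (1 + ‖g‖)
  have hr1 : 1 < r := by rw [lt_div_iff₀ (by positivity)]; linarith
  have hrg : r * ‖g‖ < 1 := by rw [div_mul_eq_mul_div, div_lt_one (by positivity)]; linarith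
  have hderiv : ∀ x ∈ Set.Ioo (-r) r,
      HasDerivAt (fun t : ℝ => exp (-logOneAdd (t • g)) * (1 + t • g)) 0 x := by
    intro x hx
    have hexp := (hasFDerivAt_exp (𝕂 := ℝ) (x := -logOneAdd (x • g))).comp_hasDerivAt x
      (hasDerivAt_logOneAdd_smul g hrg hx).neg
    refine (hexp.mul (((hasDerivAt_id x).smul_const g).const_add 1)).congr_deriv ?_
    have hgeom := geom_series_mul_neg (-(x • g))
      (by rw [norm_neg]; exact norm_smul_lt_one_of_mem_Ioo g hrg hx)
    rw [sub_neg_eq_add] at hgeom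
    simp only [Function.comp_apply, Pi.neg_apply, FunLike.coe_smul, Pi.smul_apply,
      one_apply_eq_self, id, smul_eq_mul, one_smul]
    linear_combination (-(exp (-logOneAdd (x • g)) * g)) * hgeom
  have hconst := isOpen_Ioo.is_const_of_deriv_eq_zero isPreconnected_Ioo
    (fun x hx => (hderiv x hx).differentiableAt.differentiableWithinAt)
    (fun x hx => (hderiv x hx).deriv) (x := 0) (y := 1) ⟨by linarith, by linarith⟩
    ⟨by linarith, hr1⟩
  simp only [zero_smul, logOneAdd_zero, neg_zero, exp_zero, add_zero, mul_one, one_smul] at hconst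
  calc exp (logOneAdd g) = exp (logOneAdd g) * (exp (-logOneAdd g) * (1 + g)) := by
        rw [← hconst, mul_one]
    _ = 1 + g := by rw [← mul_assoc, ← exp_add, add_neg_cancel, exp_zero, one_mul]

theorem exp_logOneAdd [CompleteSpace 𝔸] {g : 𝔸} (hg : ‖g‖ < 1) : exp (logOneAdd g) = 1 + g := by
  let : NormedAlgebra ℚ 𝔸 := .restrictScalars ℚ ℝ 𝔸
  let S := Algebra.elemental ℝ g
  let : NormedCommRing S := { SubringClass.toNormedRing S with mul_comm := mul_comm }
  let : NormedAlgebra ℚ S := .restrictScalars ℚ ℝ S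
  let g' : S := ⟨g, Algebra.elemental.self_mem ℝ g⟩
  have hsum : Summable fun n : ℕ => ((-1 : ℝ) ^ n / (n + 1)) • g' ^ (n + 1) :=
    .of_norm (summable_norm_logOneAdd_term (g := g) hg)
  have hcoe : ((logOneAdd g' : S) : 𝔸) = logOneAdd g :=
    (hsum.hasSum.map S.val continuous_subtype_val).tsum_eq.symm
  calc exp (logOneAdd g) = S.val (exp (logOneAdd g')) := by
        rw [map_exp S.val continuous_subtype_val, ← hcoe]; rfl
    _ = 1 + g := congrArg S.val (exp_logOneAdd_of_commRing (g := g') hg)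

theorem eq_exp_add_logOneAdd [CompleteSpace 𝔸] {B T G : 𝔸} (hBT : Commute B T)
    (hG : exp (-B) * T = 1 + G) (hGn : ‖G‖ < 1) : T = exp (B + logOneAdd G) := by
  let : NormedAlgebra ℚ 𝔸 := .restrictScalars ℚ ℝ 𝔸
  have hBG := commute_of_exp_neg_mul_eq_one_add (Commute.refl B) hBT hG
  rw [exp_add_of_commute hBG.logOneAdd_right, exp_logOneAdd hGn, ← hG, ← mul_assoc,
    ← exp_add_of_commute (Commute.refl B).neg_right, add_neg_cancel, exp_zero, one_mul]

end LogOneAdd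

theorem stmt_11_general (𝔸 : Type*) [NormedRing 𝔸] [NormedAlgebra ℂ 𝔸] [CompleteSpace 𝔸]
    (A : 𝔸) (s m : ℕ)
    (G : 𝔸)
    (hG : NormedSpace.exp (-(((2 : ℂ) ^ s)⁻¹ • A)) *
        (∑ i ∈ range (m + 1), ((i.factorial : ℂ)⁻¹) • (((2 : ℂ) ^ s)⁻¹ • A) ^ i) = 1 + G)
    (hGnorm : ‖G‖ < 1) :
    ∃ E : 𝔸, Commute A E ∧
      (∑ i ∈ range (m + 1), ((i.factorial : ℂ)⁻¹) • (((2 : ℂ) ^ s)⁻¹ • A) ^ i) ^ (2 ^ s) =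
        NormedSpace.exp (A + E) ∧
      ‖E‖ / ‖A‖ ≤ -Real.log (1 - ‖G‖) / ‖((2 : ℂ) ^ s)⁻¹ • A‖ := by
  let : NormedAlgebra ℚ 𝔸 := .restrictScalars ℚ ℂ 𝔸
  set B := ((2 : ℂ) ^ s)⁻¹ • A
  set T := ∑ i ∈ range (m + 1), ((i.factorial : ℂ)⁻¹) • B ^ i
  have hA : A = (2 ^ s : ℕ) • B := by
    rw [← Nat.cast_smul_eq_nsmul ℂ, smul_smul]
    push_cast
    rw [mul_inv_cancel₀ (pow_ne_zero s two_ne_zero), one_smul]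
  have hAB : Commute A B := (Commute.refl A).smul_right _
  have hcommT : ∀ a, Commute a B → Commute a T := fun a h =>
    .sum_right _ _ _ fun i _ => (h.pow_right i).smul_right _
  have hAG := commute_of_exp_neg_mul_eq_one_add hAB (hcommT A hAB) hG
  refine ⟨(2 ^ s : ℕ) • logOneAdd G, hAG.logOneAdd_right.smul_right _, ?_, ?_⟩
  · rw [eq_exp_add_logOneAdd (hcommT B (Commute.refl B)) hG hGnorm, ← exp_nsmul, hA, smul_add]
  · have hnorm : ∀ x : 𝔸, ‖(2 ^ s : ℕ) • x‖ = 2 ^ s * ‖x‖ := fun x => by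
      rw [← Nat.cast_smul_eq_nsmul ℝ, norm_smul]; simp
    rw [hA, hnorm, hnorm, mul_div_mul_left _ _ (by positivity)]
    exact div_le_div_of_nonneg_right (norm_logOneAdd_le hGnorm) (norm_nonneg B)

/-- Backward error theorem of Sastre et al. (2015): if
`e^{-2^{-s}A} T_m(2^{-s}A) = I + G` with `‖G‖ < 1`, then
`(T_m(2^{-s}A))^{2^s} = e^{A+E}` for some `E` commuting with `A`, with
`‖E‖/‖A‖ ≤ -log(1-‖G‖)/‖2^{-s}A‖`. -/
theorem stmt_11 (𝔸 : Type*) [NormedRing 𝔸] [NormedAlgebra ℂ 𝔸] [CompleteSpace 𝔸]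
    (A : 𝔸) (hA : A ≠ 0) (s m : ℕ)
    (G : 𝔸)
    (hG : NormedSpace.exp (-(((2 : ℂ) ^ s)⁻¹ • A)) *
        (∑ i ∈ range (m + 1), ((i.factorial : ℂ)⁻¹) • (((2 : ℂ) ^ s)⁻¹ • A) ^ i) = 1 + G)
    (hGnorm : ‖G‖ < 1) :
    ∃ E : 𝔸, Commute A E ∧
      (∑ i ∈ range (m + 1), ((i.factorial : ℂ)⁻¹) • (((2 : ℂ) ^ s)⁻¹ • A) ^ i) ^ (2 ^ s) =
        NormedSpace.exp (A + E) ∧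
      ‖E‖ / ‖A‖ ≤ -Real.log (1 - ‖G‖) / ‖((2 : ℂ) ^ s)⁻¹ • A‖ :=
  stmt_11_general 𝔸 A s m G hG hGnorm
end
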